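/- Failure of Gauss–Legendre point unisolvence for the quadratic case: let V₁, V₂, V₃ be affinely independent points of ℝ² with barycentric coordinates λ₁, λ₂, λ₃, and define the quadratic polynomial q := 2 − 3(λ₁² + λ₂² + λ₃²). Then q vanishes at each of the six Gauss–Legendre points (X+Y)/2 ± (Y−X)/(2√3) of the three edges of the triangle (where {X,Y} ranges over the three pairs of distinct vertices), while q evaluated at the barycenter (V₁+V₂+V₃)/3 equals 1; in particular q is not the zero polynomial. -/

import Mathlib

open MeasureTheory Polynomial

/-- The "minus" Gauss–Legendre point of the edge from `X` to `Y`. -/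
noncomputable def gaussMinus (X Y : Fin 2 → ℝ) : Fin 2 → ℝ :=
  (1 / 2 : ℝ) • (X + Y) - (1 / (2 * Real.sqrt 3)) • (Y - X)

/-- The "plus" Gauss–Legendre point of the edge from `X` to `Y`. -/
noncomputable def gaussPlus (X Y : Fin 2 → ℝ) : Fin 2 → ℝ :=
  (1 / 2 : ℝ) • (X + Y) + (1 / (2 * Real.sqrt 3)) • (Y - X)

/-!
On the edge from `X` to `Y` the barycentric coordinates of `lineMap X Y t` are `1 - t`, `t` and
`0`, so there `λ₁² + λ₂² + λ₃² = (1 - t)² + t² = 1/2 + 2 (t - 1/2)²`. This equals `2/3` exactly when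
`(t - 1/2)² = 1/12`, i.e. at the roots `1/2 ± 1/(2√3)` of the degree-two Legendre polynomial
shifted to `[0, 1]`: the two Gauss–Legendre nodes. At the barycenter every coordinate is `1/3`,
so the sum of squares is `1/3` and `q = 1`.
-/

open Finset AffineMap

theorem centroid_univ_eq_smul_sum {k V ι : Type*} [Field k] [CharZero k] [AddCommGroup V]
    [Module k V] [Fintype ι] [Nonempty ι] (p : ι → V) :
    univ.centroid k p = (Fintype.card ι : k)⁻¹ • ∑ i, p i := by
  rw [centroid_def, affineCombination_eq_linear_combination _ _ _
    (sum_centroidWeights_eq_one_of_nonempty k _ univ_nonempty)]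
  simp [centroidWeights_apply, smul_sum]

section Barycentric

variable {k V P ι : Type*} [Field k] [AddCommGroup V] [Module k V] [AddTorsor V P]
  [DecidableEq ι] {p : ι → P} {lam : ι → P →ᵃ[k] k}

theorem barycentric_lineMap (hlam : ∀ i j, lam i (p j) = if i = j then 1 else 0)
    (i j m : ι) (t : k) :
    lam m (lineMap (p i) (p j) t) =
      (1 - t) * (if m = i then 1 else 0) + t * (if m = j then 1 else 0) := by
  rw [apply_lineMap, hlam, hlam, lineMap_apply_ring]

variable [Fintype ι]

theorem sum_sq_barycentric_lineMap (hlam : ∀ i j, lam i (p j) = if i = j then 1 else 0)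
    {i j : ι} (hij : i ≠ j) (t : k) :
    ∑ m, lam m (lineMap (p i) (p j) t) ^ 2 = (1 - t) ^ 2 + t ^ 2 := by
  simp_rw [barycentric_lineMap hlam]
  rw [Fintype.sum_eq_add i j hij]
  · simp [hij, hij.symm]
  · rintro m ⟨hmi, hmj⟩
    simp [hmi, hmj]

theorem barycentric_centroid [CharZero k] [Nonempty ι]
    (hlam : ∀ i j, lam i (p j) = if i = j then 1 else 0) (m : ι) :
    lam m (univ.centroid k p) = (Fintype.card ι : k)⁻¹ := by
  have hw := sum_centroidWeights_eq_one_of_nonempty k (univ : Finset ι) univ_nonempty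
  rw [centroid_def, map_affineCombination _ _ _ hw,
    affineCombination_eq_linear_combination _ _ _ hw]
  simp [centroidWeights_apply, hlam]

theorem sum_sq_barycentric_centroid [CharZero k] [Nonempty ι]
    (hlam : ∀ i j, lam i (p j) = if i = j then 1 else 0) :
    ∑ m, lam m (univ.centroid k p) ^ 2 = (Fintype.card ι : k)⁻¹ := by
  have hcard : (Fintype.card ι : k) ≠ 0 := Nat.cast_ne_zero.mpr Fintype.card_ne_zero
  simp only [barycentric_centroid hlam, sum_const, card_univ, nsmul_eq_mul]
  field_simp

end Barycentric

theorem one_sub_sq_add_sq_of_sq_sub_half {t : ℝ} (ht : (t - 1 / 2) ^ 2 = 1 / 12) :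
    (1 - t) ^ 2 + t ^ 2 = 2 / 3 := by
  linear_combination 2 * ht

theorem sq_inv_two_mul_sqrt_three : (1 / (2 * Real.sqrt 3)) ^ 2 = 1 / 12 := by
  rw [div_pow, mul_pow, Real.sq_sqrt (by norm_num : (0 : ℝ) ≤ 3)]
  norm_num

theorem gaussMinus_eq_lineMap (X Y : Fin 2 → ℝ) :
    gaussMinus X Y = lineMap X Y (1 / 2 - 1 / (2 * Real.sqrt 3)) := by
  rw [gaussMinus, lineMap_apply_module]
  module

theorem gaussPlus_eq_lineMap (X Y : Fin 2 → ℝ) :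
    gaussPlus X Y = lineMap X Y (1 / 2 + 1 / (2 * Real.sqrt 3)) := by
  rw [gaussPlus, lineMap_apply_module]
  module

theorem gauss_points_not_unisolvent_quadratic_general
    (V : Fin 3 → (Fin 2 → ℝ))
    (lam : Fin 3 → ((Fin 2 → ℝ) →ᵃ[ℝ] ℝ))
    (hlam : ∀ i j : Fin 3, lam i (V j) = if i = j then 1 else 0)
    (q : (Fin 2 → ℝ) → ℝ)
    (hq : ∀ x : Fin 2 → ℝ, q x = 2 - 3 * ((lam 0 x) ^ 2 + (lam 1 x) ^ 2 + (lam 2 x) ^ 2)) :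
    (∀ i j : Fin 3, i ≠ j →
      q (gaussMinus (V i) (V j)) = 0 ∧ q (gaussPlus (V i) (V j)) = 0) ∧
    q ((1 / 3 : ℝ) • (V 0 + V 1 + V 2)) = 1 := by
  have hq_sum : ∀ x, q x = 2 - 3 * ∑ m, lam m x ^ 2 := fun x => by
    rw [hq, Fin.sum_univ_three]
  have h_edge : ∀ {i j : Fin 3}, i ≠ j → ∀ t : ℝ, (t - 1 / 2) ^ 2 = 1 / 12 →
      q (lineMap (V i) (V j) t) = 0 := by
    intro i j hij t ht
    rw [hq_sum, sum_sq_barycentric_lineMap hlam hij, one_sub_sq_add_sq_of_sq_sub_half ht]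
    norm_num
  refine ⟨fun i j hij => ⟨?_, ?_⟩, ?_⟩
  · rw [gaussMinus_eq_lineMap]
    exact h_edge hij _ (by rw [sub_sub_cancel_left, neg_sq, sq_inv_two_mul_sqrt_three])
  · rw [gaussPlus_eq_lineMap]
    exact h_edge hij _ (by rw [add_sub_cancel_left, sq_inv_two_mul_sqrt_three])
  · have h_centroid : (1 / 3 : ℝ) • (V 0 + V 1 + V 2) = univ.centroid ℝ V := by
      rw [centroid_univ_eq_smul_sum, Fin.sum_univ_three]
      norm_num
    rw [h_centroid, hq_sum, sum_sq_barycentric_centroid hlam]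
    norm_num

/-- The quadratic `2 − 3(λ₁² + λ₂² + λ₃²)` vanishes at the six Gauss–Legendre points of the
three edges, yet equals `1` at the barycenter; hence Gauss–Legendre point evaluations are
not unisolvent for quadratics. -/
theorem gauss_points_not_unisolvent_quadratic
    (V : Fin 3 → (Fin 2 → ℝ)) (hV : AffineIndependent ℝ V)
    (lam : Fin 3 → ((Fin 2 → ℝ) →ᵃ[ℝ] ℝ))
    (hlam : ∀ i j : Fin 3, lam i (V j) = if i = j then 1 else 0)
    (q : (Fin 2 → ℝ) → ℝ)
    (hq : ∀ x : Fin 2 → ℝ, q x = 2 - 3 * ((lam 0 x) ^ 2 + (lam 1 x) ^ 2 + (lam 2 x) ^ 2)) :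
    (∀ i j : Fin 3, i ≠ j →
      q (gaussMinus (V i) (V j)) = 0 ∧ q (gaussPlus (V i) (V j)) = 0) ∧
    q ((1 / 3 : ℝ) • (V 0 + V 1 + V 2)) = 1 :=
  gauss_points_not_unisolvent_quadratic_general V lam hlam q hq
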